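/- arXiv:math/0608083 — 3 statements merged into one kernel-verified Lean document; each statement's English description precedes it below -/
import Mathlib

section
/- For all finite simple graphs G and H and every n ≥ 1, α((G+H)^n) ≥ ∑_{k=0}^{n} C(n,k)·a_k·b_{n-k}, where a_k = α(G^k) for k ≥ 1, b_k = α(H^k) for k ≥ 1, and a_0 = b_0 = 1. -/
/-- The `k`-th strong power of a simple graph: vertices are `k`-tuples, and two distinct
tuples are adjacent iff in each coordinate the entries are equal or adjacent. -/
def gStrongPow {α : Type*} (G : SimpleGraph α) (k : ℕ) :
    SimpleGraph (Fin k → α) where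
  Adj u v := u ≠ v ∧ ∀ i, u i = v i ∨ G.Adj (u i) (v i)
  symm := by
    constructor
    rintro u v ⟨hne, h⟩
    exact ⟨hne.symm, fun i => (h i).imp Eq.symm (fun h' => G.adj_symm h')⟩
  loopless := ⟨fun u h => h.1 rfl⟩
/-- The independence number of a graph on a finite vertex type: the maximum size of a
set of pairwise non-adjacent vertices. -/
noncomputable def gIndepNum {α : Type*} [Fintype α] (G : SimpleGraph α) : ℕ :=
  sSup {n | ∃ s : Finset α, s.card = n ∧ (s : Set α).Pairwise (fun a b => ¬ G.Adj a b)}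


/-!
Sort the tuples `Fin n → α ⊕ β` by the set `S` of coordinates landing in `α`. Since `G + H` has
no edges between `α` and `β`, two tuples that are equal or adjacent in `(G + H)^n` have the same
`S`, and for a fixed `S` they are equal or adjacent exactly when their `α`-parts are so in
`G^|S|` and their `β`-parts in `H^(n - |S|)`. Gluing, for every `S`, an independent set of size
`a_|S|` with one of size `b_(n - |S|)` therefore gives an independent set of `(G + H)^n` of size
`∑_S a_|S| b_(n - |S|) = ∑_k C(n, k) a_k b_(n - k)`.
-/

open Finset

namespace SimpleGraph

variable {α β : Type*}

lemma gIndepNum_eq_indepNum [Fintype α] (G : SimpleGraph α) : gIndepNum G = G.indepNum := by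
  unfold gIndepNum indepNum
  congr! 3 with n s
  simp [isNIndepSet_iff, IsIndepSet, and_comm]

lemma isIndepSet_gStrongPow_iff (G : SimpleGraph α) {k : ℕ} (s : Set (Fin k → α)) :
    (gStrongPow G k).IsIndepSet s ↔
      ∀ u ∈ s, ∀ v ∈ s, (∀ i, u i = v i ∨ G.Adj (u i) (v i)) → u = v := by
  simp only [IsIndepSet, Set.Pairwise, gStrongPow, not_and]
  grind

lemma isLeft_eq_of_eq_or_sum_adj {G : SimpleGraph α} {H : SimpleGraph β} {x y : α ⊕ β}
    (h : x = y ∨ (G ⊕g H).Adj x y) : x.isLeft = y.isLeft := by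
  rcases h with rfl | h
  · rfl
  · cases x <;> cases y <;> simp_all

lemma map_eq_or_sum_adj_map_iff {ι κ : Type*} {G : SimpleGraph α} {H : SimpleGraph β}
    (f f' : ι → α) (g g' : κ → β) :
    (∀ x, Sum.map f g x = Sum.map f' g' x ∨ (G ⊕g H).Adj (Sum.map f g x) (Sum.map f' g' x)) ↔
      (∀ i, f i = f' i ∨ G.Adj (f i) (f' i)) ∧ (∀ j, g j = g' j ∨ H.Adj (g j) (g' j)) := by
  simp [Sum.forall]

lemma exists_isIndepSet_gStrongPow_card_eq [Fintype α] (G : SimpleGraph α) {a : ℕ → ℕ}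
    (ha0 : a 0 = 1) (ha : ∀ k, 1 ≤ k → a k = gIndepNum (gStrongPow G k)) (k : ℕ) :
    ∃ A : Finset (Fin k → α), (gStrongPow G k).IsIndepSet A ∧ #A = a k := by
  rcases k with _ | k
  · exact ⟨{Fin.elim0}, by simp, by simp [ha0]⟩
  · obtain ⟨A, hA⟩ := (gStrongPow G (k + 1)).exists_isNIndepSet_indepNum
    exact ⟨A, hA.isIndepSet, by rw [hA.card_eq, ha _ k.succ_pos,
      gIndepNum_eq_indepNum]⟩

end SimpleGraph

open SimpleGraph

section Glue

variable {α β : Type*} {n : ℕ}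

noncomputable def Finset.splitEquiv (S : Finset (Fin n)) : Fin #S ⊕ Fin (n - #S) ≃ Fin n :=
  (Equiv.sumCongr (Fintype.equivFinOfCardEq (Fintype.card_coe S)).symm
    (Fintype.equivFinOfCardEq (by simp [Fintype.card_subtype_compl])).symm).trans
    (Equiv.sumCompl (· ∈ S))

lemma Finset.splitEquiv_mem_iff (S : Finset (Fin n)) (x : Fin #S ⊕ Fin (n - #S)) :
    S.splitEquiv x ∈ S ↔ x.isLeft := by
  rcases x with j | j
  · simp [splitEquiv]
  · simpa [splitEquiv] using Subtype.property (p := (· ∉ S)) _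

noncomputable def glue (S : Finset (Fin n)) (p : (Fin #S → α) × (Fin (n - #S) → β)) :
    Fin n → α ⊕ β :=
  Sum.map p.1 p.2 ∘ S.splitEquiv.symm

lemma glue_splitEquiv (S : Finset (Fin n)) (p : (Fin #S → α) × (Fin (n - #S) → β))
    (x : Fin #S ⊕ Fin (n - #S)) : glue S p (S.splitEquiv x) = Sum.map p.1 p.2 x := by
  simp [glue]

lemma isLeft_glue_iff (S : Finset (Fin n)) (p : (Fin #S → α) × (Fin (n - #S) → β))
    (i : Fin n) : (glue S p i).isLeft ↔ i ∈ S := by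
  obtain ⟨x, rfl⟩ := S.splitEquiv.surjective i
  rw [glue_splitEquiv, Sum.isLeft_map, S.splitEquiv_mem_iff]

lemma glue_injective (S : Finset (Fin n)) : Function.Injective (glue (α := α) (β := β) S) := by
  intro p q h
  have hx : ∀ x, Sum.map p.1 p.2 x = Sum.map q.1 q.2 x := fun x => by
    rw [← glue_splitEquiv, ← glue_splitEquiv, h]
  exact Prod.ext (funext fun j => Sum.inl_injective (hx (.inl j)))
    (funext fun j => Sum.inr_injective (hx (.inr j)))

lemma eq_of_isLeft_glue_eq {S T : Finset (Fin n)} {p : (Fin #S → α) × (Fin (n - #S) → β)}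
    {q : (Fin #T → α) × (Fin (n - #T) → β)}
    (h : ∀ i, (glue S p i).isLeft = (glue T q i).isLeft) : S = T := by
  ext i
  rw [← isLeft_glue_iff S p, h, isLeft_glue_iff]

lemma glue_eq_or_sum_adj_iff {G : SimpleGraph α} {H : SimpleGraph β} (S : Finset (Fin n))
    (p q : (Fin #S → α) × (Fin (n - #S) → β)) :
    (∀ i, glue S p i = glue S q i ∨ (G ⊕g H).Adj (glue S p i) (glue S q i)) ↔
      (∀ j, p.1 j = q.1 j ∨ G.Adj (p.1 j) (q.1 j)) ∧
        (∀ j, p.2 j = q.2 j ∨ H.Adj (p.2 j) (q.2 j)) := by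
  rw [← map_eq_or_sum_adj_map_iff, ← S.splitEquiv.forall_congr_right]
  simp only [glue_splitEquiv]

noncomputable def glueFamily [DecidableEq α] [DecidableEq β] (n : ℕ)
    (A : ∀ k, Finset (Fin k → α)) (B : ∀ k, Finset (Fin k → β)) : Finset (Fin n → α ⊕ β) :=
  univ.biUnion fun S => (A #S ×ˢ B (n - #S)).image (glue S)

lemma isIndepSet_glueFamily [DecidableEq α] [DecidableEq β] {G : SimpleGraph α}
    {H : SimpleGraph β} {A : ∀ k, Finset (Fin k → α)} {B : ∀ k, Finset (Fin k → β)}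
    (hA : ∀ k, (gStrongPow G k).IsIndepSet (A k))
    (hB : ∀ k, (gStrongPow H k).IsIndepSet (B k)) :
    (gStrongPow (G ⊕g H) n).IsIndepSet (glueFamily n A B) := by
  rw [isIndepSet_gStrongPow_iff]
  simp only [glueFamily, coe_biUnion, coe_univ, Set.mem_univ, Set.iUnion_true, Set.mem_iUnion,
    coe_image, Set.mem_image, mem_coe, mem_product]
  rintro _ ⟨S, p, ⟨hp₁, hp₂⟩, rfl⟩ _ ⟨T, q, ⟨hq₁, hq₂⟩, rfl⟩ hpq
  obtain rfl : S = T := eq_of_isLeft_glue_eq fun i => isLeft_eq_of_eq_or_sum_adj (hpq i)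
  obtain ⟨h₁, h₂⟩ := (glue_eq_or_sum_adj_iff S p q).1 hpq
  have hpq₁ : p.1 = q.1 := (isIndepSet_gStrongPow_iff G _).1 (hA _) _ hp₁ _ hq₁ h₁
  have hpq₂ : p.2 = q.2 := (isIndepSet_gStrongPow_iff H _).1 (hB _) _ hp₂ _ hq₂ h₂
  rw [Prod.ext hpq₁ hpq₂]

lemma card_glueFamily [DecidableEq α] [DecidableEq β] (A : ∀ k, Finset (Fin k → α))
    (B : ∀ k, Finset (Fin k → β)) :
    #(glueFamily n A B) = ∑ k ∈ range (n + 1), n.choose k * #(A k) * #(B (n - k)) := by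
  rw [glueFamily, card_biUnion]
  · simp_rw [card_image_of_injective _ (glue_injective _), card_product]
    rw [← powerset_univ, sum_powerset_apply_card (fun k => #(A k) * #(B (n - k)))]
    simp [mul_assoc]
  · intro S _ T _ hST
    simp only [Function.onFun, Finset.disjoint_left, mem_image, not_exists, not_and]
    rintro _ ⟨p, -, rfl⟩ q - hqp
    exact hST (eq_of_isLeft_glue_eq fun i => by rw [hqp])

end Glue

theorem indepNum_strongPow_sum_ge_general
    {α β : Type*} [Fintype α] [Fintype β] (G : SimpleGraph α) (H : SimpleGraph β)
    (n : ℕ) (a b : ℕ → ℕ)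
    (ha0 : a 0 = 1) (hb0 : b 0 = 1)
    (ha : ∀ k, 1 ≤ k → a k = gIndepNum (gStrongPow G k))
    (hb : ∀ k, 1 ≤ k → b k = gIndepNum (gStrongPow H k)) :
    ∑ k ∈ Finset.range (n + 1), n.choose k * a k * b (n - k) ≤
      gIndepNum (gStrongPow (G ⊕g H) n) := by
  classical
  choose A hA hAcard using exists_isIndepSet_gStrongPow_card_eq G ha0 ha
  choose B hB hBcard using exists_isIndepSet_gStrongPow_card_eq H hb0 hb
  have hindep := isIndepSet_glueFamily (n := n) hA hB
  calc ∑ k ∈ range (n + 1), n.choose k * a k * b (n - k)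
      = #(glueFamily n A B) := by simp only [card_glueFamily, hAcard, hBcard]
    _ ≤ gIndepNum (gStrongPow (G ⊕g H) n) := by
      rw [gIndepNum_eq_indepNum]
      exact hindep.card_le_indepNum

/-- For finite simple graphs `G`, `H` and every `n ≥ 1`,
`α((G + H)^n) ≥ ∑_{k = 0}^{n} C(n, k) · a_k · b_{n - k}`, where `a_k = α(G^k)` and
`b_k = α(H^k)` for `k ≥ 1`, and `a₀ = b₀ = 1`. -/
theorem indepNum_strongPow_sum_ge
    {α β : Type*} [Fintype α] [Fintype β] (G : SimpleGraph α) (H : SimpleGraph β)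
    (n : ℕ) (hn : 1 ≤ n) (a b : ℕ → ℕ)
    (ha0 : a 0 = 1) (hb0 : b 0 = 1)
    (ha : ∀ k, 1 ≤ k → a k = gIndepNum (gStrongPow G k))
    (hb : ∀ k, 1 ≤ k → b k = gIndepNum (gStrongPow H k)) :
    ∑ k ∈ Finset.range (n + 1), n.choose k * a k * b (n - k) ≤
      gIndepNum (gStrongPow (G ⊕g H) n) :=
  indepNum_strongPow_sum_ge_general G H n a b ha0 hb0 ha hb
end

section
/- Let r ≥ s ≥ 1 and m ≥ 1, and for each j ∈ {1,…,m} let P_j be a finite set of primes, each greater than √s, such that ⋂_{j=1}^{m} P_j = ∅. For each j define the graph G_j whose vertex set is the collection of all s-element subsets of {1,…,r}, where distinct A and B are adjacent iff |A∩B| ≡ s (mod q) for some q ∈ P_j. Then the set of diagonal m-tuples {(A^{(1)}, A^{(2)}, …, A^{(m)}) : A an s-element subset of {1,…,r}}, where A^{(j)} denotes the copy of A in the j-th summand of the disjoint union G₁+⋯+G_m, is an independent set of size C(r,s) in the m-th strong power (G₁+⋯+G_m)^m; consequently c(G₁+⋯+G_m) ≥ C(r,s)^{1/m}. -/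
/-- Disjoint union of a family of simple graphs. -/
def gSigmaSum {ι : Type*} {α : ι → Type*} (G : ∀ i, SimpleGraph (α i)) :
    SimpleGraph (Σ i, α i) where
  Adj x y := ∃ i a b, (G i).Adj a b ∧ x = ⟨i, a⟩ ∧ y = ⟨i, b⟩
  symm := by
    constructor
    rintro _ _ ⟨i, a, b, h, rfl, rfl⟩
    exact ⟨i, b, a, (G i).adj_symm h, rfl, rfl⟩
  loopless := by
    constructor
    rintro _ ⟨i, a, b, h, rfl, he⟩
    injection he with h1 h2
    exact (G i).irrefl (h2 ▸ h)
/-- The Shannon capacity `c(G) = sup_{k ≥ 1} α(G^k)^(1/k)`. -/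
noncomputable def gShannonCapacity {α : Type*} [Fintype α] (G : SimpleGraph α) : ℝ :=
  ⨆ k : ℕ, (gIndepNum (gStrongPow G (k + 1)) : ℝ) ^ ((1 : ℝ) / (k + 1))

/-- The graph on all `s`-element subsets of `{1, …, r}` in which distinct `A`, `B` are
adjacent iff `|A ∩ B| ≡ s (mod q)` for some `q ∈ P`. -/
def gInterGraph (r s : ℕ) (P : Finset ℕ) :
    SimpleGraph {A : Finset (Fin r) // A.card = s} where
  Adj A B := A ≠ B ∧ ∃ q ∈ P, (A.1 ∩ B.1).card ≡ s [MOD q]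
  symm := by
    constructor
    rintro A B ⟨hne, q, hqP, hmod⟩
    exact ⟨hne.symm, q, hqP, by rwa [Finset.inter_comm]⟩
  loopless := ⟨fun A h => h.1 rfl⟩

/-!
If the diagonal tuples of `A ≠ B` were adjacent in the strong power, `A` and `B` would be
adjacent in every `G_j`, witnessed by primes `q_j ∈ P_j` dividing `s - |A ∩ B|`, a number in
`(0, s]`. Two distinct primes whose squares exceed `s` have product exceeding `s`, so they cannot
both divide it: all `q_j` coincide and lie in `⋂ P_j = ∅`. Hence the `C(r, s)` diagonal tuples
are independent in the `m`-th power, giving `c ≥ α(G^m)^(1/m) ≥ C(r, s)^(1/m)`.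
-/

lemma Nat.Prime.eq_of_dvd_of_dvd_of_lt_mul {p q n : ℕ} (hp : p.Prime) (hq : q.Prime)
    (hpn : p ∣ n) (hqn : q ∣ n) (hn : 0 < n) (hlt : n < p * q) : p = q := by
  by_contra hne
  have hpq : p * q ∣ n := ((Nat.coprime_primes hp hq).2 hne).mul_dvd_of_dvd_of_dvd hpn hqn
  exact (Nat.le_of_dvd hn hpq).not_gt hlt

lemma Nat.lt_mul_of_lt_mul_self {s p q : ℕ} (hp : s < p * p) (hq : s < q * q) : s < p * q := by
  rcases le_total p q with h | h
  · exact hp.trans_le (Nat.mul_le_mul_left p h)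
  · exact hq.trans_le (Nat.mul_le_mul_right q h)

lemma Finset.card_inter_lt_of_card_eq_of_ne {α : Type*} [DecidableEq α] {A B : Finset α}
    {s : ℕ} (hA : A.card = s) (hB : B.card = s) (hAB : A ≠ B) : (A ∩ B).card < s := by
  have hAB' : ¬ A ⊆ B := fun h => hAB (Finset.eq_of_subset_of_card_le h (hA.trans hB.symm).ge)
  have hssub : A ∩ B ⊂ A :=
    Finset.inter_subset_left.ssubset_of_ne fun h => hAB' (h ▸ Finset.inter_subset_right)
  exact hA ▸ Finset.card_lt_card hssub

lemma eq_of_card_inter_modEq {α : Type*} [DecidableEq α] {A B : Finset α} {s q q' : ℕ}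
    (hA : A.card = s) (hB : B.card = s) (hAB : A ≠ B)
    (hq : q.Prime) (hqs : s < q * q) (hq' : q'.Prime) (hq's : s < q' * q')
    (hmod : (A ∩ B).card ≡ s [MOD q]) (hmod' : (A ∩ B).card ≡ s [MOD q']) : q = q' := by
  have hlt := Finset.card_inter_lt_of_card_eq_of_ne hA hB hAB
  refine hq.eq_of_dvd_of_dvd_of_lt_mul hq' ((Nat.modEq_iff_dvd' hlt.le).1 hmod)
    ((Nat.modEq_iff_dvd' hlt.le).1 hmod') (Nat.sub_pos_of_lt hlt) ?_
  exact (Nat.sub_le _ _).trans_lt (Nat.lt_mul_of_lt_mul_self hqs hq's)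

lemma not_forall_gInterGraph_adj {ι : Type*} [Nonempty ι] {r s : ℕ} {P : ι → Finset ℕ}
    (hP : ∀ j, ∀ q ∈ P j, q.Prime ∧ s < q * q) (hinter : ¬ ∃ q, ∀ j, q ∈ P j)
    (A B : {A : Finset (Fin r) // A.card = s}) : ¬ ∀ j, (gInterGraph r s (P j)).Adj A B := by
  intro hadj
  obtain ⟨j₀⟩ := ‹Nonempty ι›
  choose q hqP hq using fun j => (hadj j).2
  have hAB : A.1 ≠ B.1 := Subtype.val_injective.ne (hadj j₀).1
  refine hinter ⟨q j₀, fun j => ?_⟩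
  have hqj : q j = q j₀ := eq_of_card_inter_modEq A.2 B.2 hAB (hP j _ (hqP j)).1
    (hP j _ (hqP j)).2 (hP j₀ _ (hqP j₀)).1 (hP j₀ _ (hqP j₀)).2 (hq j) (hq j₀)
  exact hqj ▸ hqP j

lemma gSigmaSum_adj_mk_mk {ι : Type*} {α : ι → Type*} {G : ∀ i, SimpleGraph (α i)} {i : ι}
    {a b : α i} : (gSigmaSum G).Adj ⟨i, a⟩ ⟨i, b⟩ ↔ (G i).Adj a b := by
  constructor
  · rintro ⟨i', a', b', h, ha, hb⟩
    cases ha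
    cases hb
    exact h
  · exact fun h => ⟨i, a, b, h, rfl, rfl⟩

lemma gStrongPow_gSigmaSum_adj_diag {α : Type*} {k : ℕ} {G : Fin k → SimpleGraph α} {a b : α}
    (h : (gStrongPow (gSigmaSum G) k).Adj (fun j => ⟨j, a⟩) (fun j => ⟨j, b⟩)) (j : Fin k) :
    (G j).Adj a b := by
  rcases h.2 j with heq | hadj
  · obtain rfl : a = b := eq_of_heq (Sigma.mk.inj heq).2
    exact absurd rfl h.1
  · exact gSigmaSum_adj_mk_mk.1 hadj

lemma pairwise_not_gStrongPow_gSigmaSum_adj_range_diag {α : Type*} {k : ℕ}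
    {G : Fin k → SimpleGraph α} (h : ∀ a b, ¬ ∀ j, (G j).Adj a b) :
    (Set.range fun a => fun j : Fin k => (⟨j, a⟩ : Σ _ : Fin k, α)).Pairwise
      fun x y => ¬ (gStrongPow (gSigmaSum G) k).Adj x y := by
  rintro _ ⟨a, rfl⟩ _ ⟨b, rfl⟩ - hadj
  exact h a b (gStrongPow_gSigmaSum_adj_diag hadj)

lemma ncard_range_diag {α : Type*} {k : ℕ} (hk : k ≠ 0) :
    (Set.range fun a : α => fun j : Fin k => (⟨j, a⟩ : Σ _ : Fin k, α)).ncard = Nat.card α := by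
  refine Set.ncard_range_of_injective fun a b hab => ?_
  exact eq_of_heq (Sigma.mk.inj (congrFun hab ⟨0, Nat.pos_of_ne_zero hk⟩)).2

section IndepNum

variable {α : Type*} [Fintype α] (G : SimpleGraph α)

lemma gIndepNum_le_card : gIndepNum G ≤ Fintype.card α :=
  csSup_le' fun _ ⟨t, ht, _⟩ => ht ▸ t.card_le_univ

lemma ncard_le_gIndepNum {S : Set α} (hS : S.Pairwise fun a b => ¬ G.Adj a b) :
    S.ncard ≤ gIndepNum G := by
  classical
  refine le_csSup ⟨Fintype.card α, fun _ ⟨t, ht, _⟩ => ht ▸ t.card_le_univ⟩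
    ⟨S.toFinset, (Set.ncard_eq_toFinset_card' S).symm, by simpa using hS⟩

lemma gIndepNum_gStrongPow_rpow_le_card {k : ℕ} (hk : k ≠ 0) :
    (gIndepNum (gStrongPow G k) : ℝ) ^ ((1 : ℝ) / k) ≤ Fintype.card α := by
  have hle : (gIndepNum (gStrongPow G k) : ℝ) ≤ (Fintype.card α : ℝ) ^ k := by
    exact_mod_cast (gIndepNum_le_card _).trans_eq (by rw [Fintype.card_fun, Fintype.card_fin])
  calc (gIndepNum (gStrongPow G k) : ℝ) ^ ((1 : ℝ) / k)
      ≤ ((Fintype.card α : ℝ) ^ k) ^ ((k : ℝ)⁻¹) := by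
        rw [one_div]
        exact Real.rpow_le_rpow (Nat.cast_nonneg _) hle (by positivity)
    _ = Fintype.card α := Real.pow_rpow_inv_natCast (Nat.cast_nonneg _) hk

lemma gIndepNum_gStrongPow_rpow_le_gShannonCapacity {k : ℕ} (hk : k ≠ 0) :
    (gIndepNum (gStrongPow G k) : ℝ) ^ ((1 : ℝ) / k) ≤ gShannonCapacity G := by
  have hbdd : BddAbove (Set.range fun k : ℕ =>
      (gIndepNum (gStrongPow G (k + 1)) : ℝ) ^ ((1 : ℝ) / (k + 1))) := by
    refine ⟨Fintype.card α, ?_⟩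
    rintro _ ⟨k, rfl⟩
    exact_mod_cast gIndepNum_gStrongPow_rpow_le_card G k.succ_ne_zero
  obtain ⟨k, rfl⟩ := Nat.exists_eq_succ_of_ne_zero hk
  exact le_ciSup_of_le hbdd k (by push_cast; rfl)

end IndepNum

theorem diagonal_indep_and_shannonCapacity_ge_general
    (r s m : ℕ) (hm : 1 ≤ m)
    (P : Fin m → Finset ℕ)
    (hP : ∀ j, ∀ q ∈ P j, q.Prime ∧ s < q * q)
    (hinter : ¬ ∃ q, ∀ j, q ∈ P j) :
    (Set.range (fun A : {A : Finset (Fin r) // A.card = s} =>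
        (fun j : Fin m => (⟨j, A⟩ : Σ _ : Fin m, {A : Finset (Fin r) // A.card = s})))).Pairwise
      (fun x y => ¬ (gStrongPow (gSigmaSum (fun j => gInterGraph r s (P j))) m).Adj x y) ∧
    (Set.range (fun A : {A : Finset (Fin r) // A.card = s} =>
        (fun j : Fin m => (⟨j, A⟩ : Σ _ : Fin m, {A : Finset (Fin r) // A.card = s})))).ncard
      = r.choose s ∧
    (r.choose s : ℝ) ^ ((1 : ℝ) / m) ≤
      gShannonCapacity (gSigmaSum (fun j => gInterGraph r s (P j))) := by
  have hm0 : m ≠ 0 := Nat.one_le_iff_ne_zero.1 hm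
  have : Nonempty (Fin m) := ⟨⟨0, hm⟩⟩
  have hindep := pairwise_not_gStrongPow_gSigmaSum_adj_range_diag
    (G := fun j => gInterGraph r s (P j)) (not_forall_gInterGraph_adj hP hinter)
  have hcard : (Set.range (fun A : {A : Finset (Fin r) // A.card = s} =>
      (fun j : Fin m => (⟨j, A⟩ : Σ _ : Fin m, {A : Finset (Fin r) // A.card = s})))).ncard
        = r.choose s := by
    rw [ncard_range_diag hm0, Nat.card_eq_fintype_card, Fintype.card_finset_len,
      Fintype.card_fin]
  refine ⟨hindep, hcard, ?_⟩
  calc (r.choose s : ℝ) ^ ((1 : ℝ) / m)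
      ≤ (gIndepNum (gStrongPow (gSigmaSum fun j => gInterGraph r s (P j)) m) : ℝ)
          ^ ((1 : ℝ) / m) := by
        gcongr
        exact_mod_cast hcard ▸ ncard_le_gIndepNum _ hindep
    _ ≤ _ := gIndepNum_gStrongPow_rpow_le_gShannonCapacity _ hm0

/-- Let `r ≥ s ≥ 1`, `m ≥ 1`, and for each `j` let `P j` be a finite set of primes, each
greater than `√s`, with `⋂_j P j = ∅`.  Then the set of diagonal `m`-tuples is an
independent set of size `C(r, s)` in the `m`-th strong power of the disjoint union
`G₁ + ⋯ + G_m` of the graphs `G_j = gInterGraph r s (P j)`;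
consequently `c(G₁ + ⋯ + G_m) ≥ C(r, s)^(1/m)`. -/
theorem diagonal_indep_and_shannonCapacity_ge
    (r s m : ℕ) (hs : 1 ≤ s) (hsr : s ≤ r) (hm : 1 ≤ m)
    (P : Fin m → Finset ℕ)
    (hP : ∀ j, ∀ q ∈ P j, q.Prime ∧ s < q * q)
    (hinter : ¬ ∃ q, ∀ j, q ∈ P j) :
    (Set.range (fun A : {A : Finset (Fin r) // A.card = s} =>
        (fun j : Fin m => (⟨j, A⟩ : Σ _ : Fin m, {A : Finset (Fin r) // A.card = s})))).Pairwise
      (fun x y => ¬ (gStrongPow (gSigmaSum (fun j => gInterGraph r s (P j))) m).Adj x y) ∧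
    (Set.range (fun A : {A : Finset (Fin r) // A.card = s} =>
        (fun j : Fin m => (⟨j, A⟩ : Σ _ : Fin m, {A : Finset (Fin r) // A.card = s})))).ncard
      = r.choose s ∧
    (r.choose s : ℝ) ^ ((1 : ℝ) / m) ≤
      gShannonCapacity (gSigmaSum (fun j => gInterGraph r s (P j))) :=
  diagonal_indep_and_shannonCapacity_ge_general r s m hm P hP hinter
end

section
/- Let q be a prime, let r ≥ s ≥ 1 with s not divisible by q, and let m ≥ 1. For each j ∈ {1,…,m}, let G_j be a simple graph whose vertex set is the collection of all s-element subsets of {1,…,r}, such that whenever distinct vertices A and B are non-adjacent in G_j one has |A∩B| ≢ s (mod q). Then the Shannon capacity of the disjoint union satisfies c(G₁+⋯+G_m) ≤ m·∑_{i=0}^{q-1} C(r,i). -/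
open Polynomial Submodule

section Polynomials

variable {R : Type*} [CommRing R] [IsDomain R]

variable (R) in
noncomputable def descPochhammerSequence : Polynomial.Sequence R where
  elems' i := descPochhammer R i
  degree_eq' i := by
    rw [degree_eq_natDegree (monic_descPochhammer R i).ne_zero, descPochhammer_natDegree]

theorem eval_natCast_comp_mem_span_choose {β : Type*} {n : ℕ} {p : R[X]} (hp : p.degree < n)
    (f : β → ℕ) :
    (fun b => p.eval (f b : R)) ∈
      span R (Set.range fun k : Fin n => fun b => ((f b).choose k : R)) := by
  let S := descPochhammerSequence R
  have hpS : p ∈ span R (S '' Set.Iio n) := by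
    rw [S.span_degreeLT fun i _ => (monic_descPochhammer R i).leadingCoeff ▸ isUnit_one,
      mem_degreeLT]
    exact hp
  let evalAt : R[X] →ₗ[R] β → R := LinearMap.pi fun b => leval (f b : R)
  have h := mem_map_of_mem (f := evalAt) hpS
  rw [map_span] at h
  refine span_le.2 ?_ h
  rintro _ ⟨_, ⟨k, hk, rfl⟩, rfl⟩
  have hk' : evalAt (S k) = (k.factorial : R) • fun b => ((f b).choose k : R) := by
    funext b
    simp [evalAt, S, descPochhammerSequence, descPochhammer_eval_eq_descFactorial,
      Nat.descFactorial_eq_factorial_mul_choose]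
  rw [hk']
  exact smul_mem _ _ (subset_span ⟨⟨k, hk⟩, rfl⟩)

end Polynomials

theorem ZMod.ite_eq_eval_one_sub_pow {q : ℕ} [Fact q.Prime] (a b : ZMod q) :
    (if a = b then 1 else 0) = (1 - (X - C b) ^ (q - 1)).eval a := by
  have hq := (Fact.out : q.Prime).one_lt
  split_ifs with h
  · simp [h, zero_pow (Nat.sub_ne_zero_of_lt hq)]
  · simp [ZMod.pow_card_sub_one_eq_one (sub_ne_zero.2 h)]

theorem degree_one_sub_X_sub_C_pow_lt {q : ℕ} [Fact q.Prime] (b : ZMod q) :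
    (1 - (X - C b) ^ (q - 1)).degree < (q : WithBot ℕ) := by
  have hq := (Fact.out : q.Prime).one_lt
  calc (1 - (X - C b) ^ (q - 1)).degree ≤ ((q - 1 : ℕ) : WithBot ℕ) := by
        compute_degree; exact le_rfl
    _ < q := by exact_mod_cast Nat.sub_lt (by omega) one_pos

section Subsets

variable {α : Type*} [DecidableEq α]

theorem choose_card_inter_eq_sum {R : Type*} [CommRing R] (A B : Finset α) (k : ℕ) :
    ((A ∩ B).card.choose k : R) = ∑ S ∈ A.powersetCard k, if S ⊆ B then 1 else 0 := by
  rw [Finset.sum_boole, ← Finset.card_powersetCard]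
  congr 2
  ext S
  simp only [Finset.mem_filter, Finset.mem_powersetCard, Finset.subset_inter_iff]
  tauto

theorem eval_card_inter_mem_span {R : Type*} [CommRing R] [IsDomain R] {n : ℕ}
    {p : R[X]} (hp : p.degree < n) (A : Finset α) :
    (fun B => p.eval ((A ∩ B).card : R)) ∈
      span R (Set.range fun S : {S : Finset α // S.card < n} =>
        fun B => if S.1 ⊆ B then 1 else 0) := by
  refine span_le.2 ?_ (eval_natCast_comp_mem_span_choose hp _)
  rintro _ ⟨k, rfl⟩
  beta_reduce
  have hk : (fun B => ((A ∩ B).card.choose k : R)) =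
      ∑ S ∈ A.powersetCard k, fun B => if S ⊆ B then 1 else 0 := by
    funext B
    simp only [choose_card_inter_eq_sum, Finset.sum_apply]
  rw [hk]
  refine sum_mem fun S hS => subset_span ⟨⟨S, ?_⟩, rfl⟩
  rw [(Finset.mem_powersetCard.1 hS).2]
  exact k.2

end Subsets

theorem Fintype.card_finset_card_lt {α : Type*} [Fintype α] (n : ℕ) :
    Fintype.card {S : Finset α // S.card < n} =
      ∑ i ∈ Finset.range n, (Fintype.card α).choose i := by
  rw [Fintype.card_subtype, Finset.card_eq_sum_card_fiberwise (t := Finset.range n)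
    (f := Finset.card) (fun S hS => Finset.mem_range.2 (Finset.mem_filter.1 hS).2)]
  refine Finset.sum_congr rfl fun i hi => ?_
  rw [← Finset.card_univ, ← Finset.card_powersetCard]
  congr 1
  ext S
  simp only [Finset.mem_filter, Finset.mem_univ, true_and, Finset.mem_powersetCard_univ]
  constructor
  · exact And.right
  · rintro rfl; exact ⟨Finset.mem_range.1 hi, rfl⟩

section Span

variable {R V ι : Type*} [CommRing R]

theorem prod_apply_mem_span_range_prod {κ : Type*} [Fintype κ] [DecidableEq κ] [Fintype ι]
    {f : κ → V → R} {E : ι → V → R} (hf : ∀ i, f i ∈ span R (Set.range E)) :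
    (fun v : κ → V => ∏ i, f i (v i)) ∈
      span R (Set.range fun t : κ → ι => fun v => ∏ i, E (t i) (v i)) := by
  choose c hc using fun i => (mem_span_range_iff_exists_fun R).1 (hf i)
  refine (mem_span_range_iff_exists_fun R).2 ⟨fun t => ∏ i, c i (t i), funext fun v => ?_⟩
  simp only [Finset.sum_apply, Pi.smul_apply, smul_eq_mul, ← hc, Fintype.prod_sum,
    Finset.prod_mul_distrib]

theorem comp_mem_span_range_comp {W : Type*} {f : V → R} {E : ι → V → R}
    (hf : f ∈ span R (Set.range E)) (φ : W → V) :
    f ∘ φ ∈ span R (Set.range fun t => E t ∘ φ) := by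
  have h := mem_map_of_mem (f := LinearMap.funLeft R R φ) hf
  rwa [map_span, ← Set.range_comp] at h

theorem extend_sigmaMk_mem_span_range {α κ : ι → Type*} {g : ∀ i, α i → α i → R}
    {E : ∀ i, κ i → α i → R} (hg : ∀ i a, g i a ∈ span R (Set.range (E i))) (x : Σ i, α i) :
    Function.extend (Sigma.mk x.1) (g x.1 x.2) 0 ∈
      span R (Set.range fun t : Σ i, κ i =>
        Function.extend (Sigma.mk t.1) (E t.1 t.2) 0) := by
  obtain ⟨i, a⟩ := x
  have h := mem_map_of_mem (f := Function.ExtendByZero.linearMap R (Sigma.mk i)) (hg i a)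
  rw [map_span, ← Set.range_comp] at h
  refine span_mono ?_ h
  rintro _ ⟨k, rfl⟩
  exact ⟨⟨i, k⟩, rfl⟩

end Span

namespace SimpleGraph

variable {F V : Type*} [Field F]

structure IsRepresentedBy (H : SimpleGraph V) (g : V → V → F) : Prop where
  apply_self_ne_zero : ∀ x, g x x ≠ 0
  apply_eq_zero : ∀ ⦃x y⦄, x ≠ y → ¬ H.Adj x y → g x y = 0

variable {H : SimpleGraph V} {g : V → V → F}

theorem IsRepresentedBy.linearIndependent (hg : H.IsRepresentedBy g) {I : Set V}
    (hI : I.Pairwise fun x y => ¬ H.Adj x y) : LinearIndependent F fun x : I => g x := by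
  rw [linearIndependent_iff']
  intro s c hc x hx
  have hcx := congrFun hc x
  simp only [Finset.sum_apply, Pi.smul_apply, smul_eq_mul, Pi.zero_apply] at hcx
  rw [Finset.sum_eq_single_of_mem x hx fun y _ hyx =>
    by rw [hg.apply_eq_zero (Subtype.coe_ne_coe.2 hyx) (hI y.2 x.2 (Subtype.coe_ne_coe.2 hyx)),
      mul_zero]] at hcx
  exact (mul_eq_zero.1 hcx).resolve_right (hg.apply_self_ne_zero x)

theorem IsRepresentedBy.card_le {ι : Type*} [Fintype ι] {E : ι → V → F}
    (hg : H.IsRepresentedBy g) (hE : ∀ x, g x ∈ span F (Set.range E)) {I : Finset V}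
    (hI : (I : Set V).Pairwise fun x y => ¬ H.Adj x y) : I.card ≤ Fintype.card ι := by
  have := FiniteDimensional.span_of_finite F (Set.finite_range E)
  calc I.card = Module.finrank F (span F (Set.range fun x : (I : Set V) => g x)) := by
        rw [finrank_span_eq_card (hg.linearIndependent hI)]; simp
    _ ≤ Module.finrank F (span F (Set.range E)) :=
        Submodule.finrank_mono (span_le.2 (Set.range_subset_iff.2 fun x => hE x))
    _ ≤ Fintype.card ι := finrank_range_le_card E

theorem IsRepresentedBy.strongPow (hg : H.IsRepresentedBy g) (k : ℕ) :
    (gStrongPow H k).IsRepresentedBy fun u v => ∏ i, g (u i) (v i) where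
  apply_self_ne_zero u := Finset.prod_ne_zero_iff.2 fun i _ => hg.apply_self_ne_zero (u i)
  apply_eq_zero u v huv hnadj := by
    obtain ⟨i, hne, hnadj'⟩ : ∃ i, u i ≠ v i ∧ ¬ H.Adj (u i) (v i) := by
      by_contra! h
      exact hnadj ⟨huv, fun i => or_iff_not_imp_left.2 (h i)⟩
    exact Finset.prod_eq_zero (Finset.mem_univ i) (hg.apply_eq_zero hne hnadj')

theorem IsRepresentedBy.sigma {ι : Type*} {α : ι → Type*} {H : ∀ i, SimpleGraph (α i)}
    {g : ∀ i, α i → α i → F} (hg : ∀ i, (H i).IsRepresentedBy (g i)) :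
    (gSigmaSum H).IsRepresentedBy fun x => Function.extend (Sigma.mk x.1) (g x.1 x.2) 0 where
  apply_self_ne_zero := by
    rintro ⟨i, a⟩
    rw [sigma_mk_injective.extend_apply]
    exact (hg i).apply_self_ne_zero a
  apply_eq_zero := by
    rintro ⟨i, a⟩ ⟨j, b⟩ hne hnadj
    by_cases hij : i = j
    · subst hij
      have hab : a ≠ b := fun h => hne (h ▸ rfl)
      rw [sigma_mk_injective.extend_apply]
      exact (hg i).apply_eq_zero hab fun h => hnadj ⟨i, a, b, h, rfl, rfl⟩
    · rw [Function.extend_apply' _ _ _ (by rintro ⟨c, hc⟩; exact hij (congrArg Sigma.fst hc))]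
      rfl

end SimpleGraph

theorem gIndepNum_le {α : Type*} [Fintype α] {G : SimpleGraph α} {N : ℕ}
    (h : ∀ s : Finset α, (s : Set α).Pairwise (fun a b => ¬ G.Adj a b) → s.card ≤ N) :
    gIndepNum G ≤ N :=
  csSup_le ⟨0, ∅, by simp⟩ (by rintro _ ⟨s, rfl, hs⟩; exact h s hs)

theorem gShannonCapacity_le {α : Type*} [Fintype α] {G : SimpleGraph α} {N : ℕ}
    (h : ∀ k, gIndepNum (gStrongPow G (k + 1)) ≤ N ^ (k + 1)) : gShannonCapacity G ≤ N := by
  refine ciSup_le fun k => ?_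
  calc (gIndepNum (gStrongPow G (k + 1)) : ℝ) ^ ((1 : ℝ) / (k + 1))
      ≤ ((N : ℝ) ^ (k + 1)) ^ ((k + 1 : ℕ) : ℝ)⁻¹ := by
        rw [one_div, Nat.cast_succ]
        gcongr
        exact_mod_cast h k
    _ = N := Real.pow_rpow_inv_natCast (Nat.cast_nonneg N) k.succ_ne_zero

theorem SimpleGraph.IsRepresentedBy.gShannonCapacity_le {F V ι : Type*} [Field F]
    [Fintype V] [Fintype ι] {H : SimpleGraph V} {g : V → V → F} {E : ι → V → F}
    (hg : H.IsRepresentedBy g) (hE : ∀ x, g x ∈ span F (Set.range E)) :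
    gShannonCapacity H ≤ Fintype.card ι :=
  _root_.gShannonCapacity_le fun k => gIndepNum_le fun I hI => by
    simpa only [Fintype.card_fun, Fintype.card_fin] using
      (hg.strongPow (k + 1)).card_le (fun u => prod_apply_mem_span_range_prod fun i => hE (u i)) hI

theorem isRepresentedBy_ite_card_inter_eq {α : Type*} [DecidableEq α] {q s : ℕ} [Fact q.Prime]
    {H : SimpleGraph {A : Finset α // A.card = s}}
    (hH : ∀ A B, A ≠ B → ¬ H.Adj A B → ¬ (A.1 ∩ B.1).card ≡ s [MOD q]) :
    H.IsRepresentedBy fun A B => if ((A.1 ∩ B.1).card : ZMod q) = s then (1 : ZMod q) else 0 where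
  apply_self_ne_zero A := by simp [A.2]
  apply_eq_zero A B hAB hnadj :=
    if_neg <| (ZMod.natCast_eq_natCast_iff _ _ _).not.2 (hH A B hAB hnadj)

theorem shannonCapacity_sigmaSum_le_general
    (q r s m : ℕ) (hq : q.Prime)
    (G : Fin m → SimpleGraph {A : Finset (Fin r) // A.card = s})
    (hG : ∀ j, ∀ A B : {A : Finset (Fin r) // A.card = s}, A ≠ B → ¬ (G j).Adj A B →
      ¬ (A.1 ∩ B.1).card ≡ s [MOD q]) :
    gShannonCapacity (gSigmaSum G) ≤ (m * ∑ i ∈ Finset.range q, r.choose i : ℕ) := by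
  have := Fact.mk hq
  let V := {A : Finset (Fin r) // A.card = s}
  let g : V → V → ZMod q := fun A B => if ((A.1 ∩ B.1).card : ZMod q) = s then 1 else 0
  let E : {S : Finset (Fin r) // S.card < q} → V → ZMod q :=
    fun S B => if S.1 ⊆ B.1 then 1 else 0
  have hspan : ∀ A, g A ∈ span (ZMod q) (Set.range E) := fun A => by
    simp only [g, ZMod.ite_eq_eval_one_sub_pow]
    exact comp_mem_span_range_comp
      (eval_card_inter_mem_span (degree_one_sub_X_sub_C_pow_lt _) A.1) Subtype.val
  have hcard : Fintype.card (Σ _ : Fin m, {S : Finset (Fin r) // S.card < q}) =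
      m * ∑ i ∈ Finset.range q, r.choose i := by
    simp [Fintype.card_finset_card_lt]
  rw [← hcard]
  exact (SimpleGraph.IsRepresentedBy.sigma fun j => isRepresentedBy_ite_card_inter_eq (hG j))
    |>.gShannonCapacity_le (extend_sigmaMk_mem_span_range fun _ => hspan)

/-- Let `q` be a prime, `r ≥ s ≥ 1` with `q ∤ s`, and `m ≥ 1`.  If each `G j` is a graph
on the `s`-element subsets of `{1, …, r}` such that distinct non-adjacent vertices `A`, `B`
satisfy `|A ∩ B| ≢ s (mod q)`, then `c(G₁ + ⋯ + G_m) ≤ m · ∑_{i = 0}^{q - 1} C(r, i)`. -/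
theorem shannonCapacity_sigmaSum_le
    (q r s m : ℕ) (hq : q.Prime) (hs : 1 ≤ s) (hsr : s ≤ r) (hqs : ¬ q ∣ s) (hm : 1 ≤ m)
    (G : Fin m → SimpleGraph {A : Finset (Fin r) // A.card = s})
    (hG : ∀ j, ∀ A B : {A : Finset (Fin r) // A.card = s}, A ≠ B → ¬ (G j).Adj A B →
      ¬ (A.1 ∩ B.1).card ≡ s [MOD q]) :
    gShannonCapacity (gSigmaSum G) ≤ (m * ∑ i ∈ Finset.range q, r.choose i : ℕ) :=
  shannonCapacity_sigmaSum_le_general q r s m hq G hG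
end
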